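/- For j ∈ ℕ and fixed w > 0, the set B_j = {(x,y) ∈ Q_j × Q_j : x ⪯ y + w/j} is a barrel in the locally convex cone (Q_j, V): it is convex, satisfies (B1) with v = w/j and λ = 1, and satisfies (B2) via the functionals (1/w)_j and ∞̄. -/

import Mathlib

open scoped NNReal ENNReal

/-- The positive reals, used for the values `a` in elements `a_i`. -/
abbrev Rpos := {a : ℝ // 0 < a}

/-- The cone `P = {a_i : a ∈ (0,∞), i ∈ ℕ} ∪ {0₀, ∞_∞}`. -/
inductive CP : Type where
  | zero : CP
  | inf : CP
  | elt : Rpos → ℕ+ → CP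

namespace CP

/-- Addition on `P`. -/
def add : CP → CP → CP
  | zero, x => x
  | x, zero => x
  | inf, _ => inf
  | _, inf => inf
  | elt a i, elt b j =>
      if i = j then elt ⟨a.1 + b.1, add_pos a.2 b.2⟩ i else inf

/-- Scalar multiplication by nonnegative reals on `P`. -/
noncomputable def smul (r : ℝ≥0) (x : CP) : CP :=
  if h : r = 0 then zero
  else
    match x with
    | zero => zero
    | inf => inf
    | elt a i => elt ⟨(r : ℝ) * a.1,
        mul_pos (by exact_mod_cast pos_iff_ne_zero.mpr h) a.2⟩ i

/-- The preorder on `P`: `a_i ⪯ b_j` iff `i = j` and `a ≤ b`. -/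
def le : CP → CP → Prop
  | zero, zero => True
  | inf, inf => True
  | elt a i, elt b j => i = j ∧ a.1 ≤ b.1
  | _, _ => False

/-- The neighborhood relation: `nrel v x y` means `x ⪯ y + v`. -/
def nrel (v : ℝ) : CP → CP → Prop
  | zero, _ => True
  | _, inf => True
  | elt a i, elt b j => i = j ∧ a.1 ≤ b.1 + (i : ℝ) * v
  | _, _ => False

/-- The subcone `Q_j = {b_j : b ∈ (0,∞)} ∪ {0₀, ∞_∞}`. -/
def Q (j : ℕ+) : Set CP := {x | x = zero ∨ x = inf ∨ ∃ a : Rpos, x = elt a j}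

/-- Symmetric neighborhood of `b` relative to the subcone `Qs`. -/
def symN (Qs : Set CP) (v : ℝ) (b : CP) : Set CP :=
  {a ∈ Qs | nrel v a b ∧ nrel v b a}

/-- Linearity of a functional `μ : P → ℝ ∪ {+∞}` relative to a subcone. -/
def IsLinearOn (Qs : Set CP) (μ : CP → EReal) : Prop :=
  μ zero = 0 ∧ (∀ x, μ x ≠ ⊥) ∧
  (∀ x ∈ Qs, ∀ y ∈ Qs, μ (add x y) = μ x + μ y) ∧
  (∀ r : ℝ≥0, ∀ x ∈ Qs, μ (smul r x) = ((r : ℝ) : EReal) * μ x)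

/-- (Uniform) continuity of a functional relative to a subcone. -/
def IsContOn (Qs : Set CP) (μ : CP → EReal) : Prop :=
  ∃ v : ℝ, 0 < v ∧ ∀ x ∈ Qs, ∀ y ∈ Qs, nrel v x y → μ x ≤ μ y + 1

/-- Membership in the dual cone of the subcone `Qs`. -/
def InDualOn (Qs : Set CP) (μ : CP → EReal) : Prop :=
  IsLinearOn Qs μ ∧ IsContOn Qs μ

/-- `λ B = {(λx, λy) : (x,y) ∈ B}`. -/
def scaleSet (l : ℝ≥0) (B : Set (CP × CP)) : Set (CP × CP) :=
  (fun p => (smul l p.1, smul l p.2)) '' B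

/-- `B` is a barrel in the subcone `Qs`. -/
def IsBarrelOn (Qs : Set CP) (B : Set (CP × CP)) : Prop :=
  (∀ p ∈ B, p.1 ∈ Qs ∧ p.2 ∈ Qs) ∧
  (∀ p ∈ B, ∀ q ∈ B, ∀ t : ℝ≥0, t ≤ 1 →
     (add (smul t p.1) (smul (1 - t) q.1),
      add (smul t p.2) (smul (1 - t) q.2)) ∈ B) ∧
  (∀ b ∈ Qs, ∃ v : ℝ, 0 < v ∧ ∀ a ∈ symN Qs v b,
     ∃ l : ℝ≥0, 0 < l ∧ (a, b) ∈ scaleSet l B) ∧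
  (∀ a ∈ Qs, ∀ b ∈ Qs, (a, b) ∉ B → ∃ μ : CP → EReal, InDualOn Qs μ ∧
     μ b + 1 < μ a ∧ ∀ p ∈ B, μ p.1 ≤ μ p.2 + 1)

/-- The subcone `Qs` is barreled. -/
def BarreledOn (Qs : Set CP) : Prop :=
  ∀ B, IsBarrelOn Qs B → ∀ b ∈ Qs, ∃ v : ℝ, 0 < v ∧ ∃ l : ℝ≥0, 0 < l ∧
    ∀ a ∈ symN Qs v b, (a, b) ∈ scaleSet l B

/-- The subcone `Qs` is upper-barreled. -/
def UpperBarreledOn (Qs : Set CP) : Prop :=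
  ∀ B, IsBarrelOn Qs B → ∃ v : ℝ, 0 < v ∧
    ∀ p : CP × CP, p.1 ∈ Qs → p.2 ∈ Qs → nrel v p.1 p.2 → p ∈ B

/-- The functional `∞̄` (resp. its extension `∞̄~`). -/
noncomputable def fnBarInf : CP → EReal
  | zero => 0
  | _ => ⊤

/-- The functional `0̄_k` (resp. its extension). -/
noncomputable def fnBarZero (k : ℕ+) : CP → EReal
  | zero => 0
  | inf => ⊤
  | elt _ i => if i = k then 0 else ⊤

/-- The functional `c_k : a_k ↦ c·a` (extended by `+∞` off `Q_k`). -/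
noncomputable def fnLam (c : ℝ) (k : ℕ+) : CP → EReal
  | zero => 0
  | inf => ⊤
  | elt a i => if i = k then ((c * a.1 : ℝ) : EReal) else ⊤

/-- The zero functional. -/
noncomputable def fnZero : CP → EReal := fun _ => 0

/-- The barrel `B_j = {(x,y) ∈ Q_j² : x ⪯ y + w/j}`. -/
def Bset (w : ℝ) (j : ℕ+) : Set (CP × CP) :=
  {p | p.1 ∈ Q j ∧ p.2 ∈ Q j ∧ nrel (w / (j : ℝ)) p.1 p.2}

/-- The barrel `B = ⋃_j B_j`. -/
def BigB (w : ℝ) : Set (CP × CP) := ⋃ (j : ℕ+), Bset w j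

/-- The map `Λ : Q_j → [0,∞]`, `a_j ↦ a/j`. -/
noncomputable def Lam (j : ℕ+) : CP → ℝ≥0∞
  | zero => 0
  | inf => ⊤
  | elt a _ => ENNReal.ofReal (a.1 / (j : ℝ))


/-! ### Auxiliary lemmas for `stmt12` -/

lemma smul_one' (x : CP) : smul 1 x = x := by
  unfold smul
  rw [dif_neg one_ne_zero]
  cases x with
  | zero => rfl
  | inf => rfl
  | elt a i => simp

lemma add_mem_Q {j : ℕ+} {x y : CP} (hx : x ∈ Q j) (hy : y ∈ Q j) :
    add x y ∈ Q j := by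
  rcases hx with rfl | rfl | ⟨⟨xa, hxa⟩, rfl⟩ <;>
    rcases hy with rfl | rfl | ⟨⟨ya, hya⟩, rfl⟩ <;>
    simp [Q, add] <;> positivity

lemma smul_mem_Q {j : ℕ+} {x : CP} (r : ℝ≥0) (hx : x ∈ Q j) :
    smul r x ∈ Q j := by
  by_cases hr : r = 0
  · subst hr
    rcases hx with rfl | rfl | ⟨a, rfl⟩ <;> simp [Q, smul]
  · have hr' : (0 : ℝ) < (r : ℝ) := by exact_mod_cast pos_iff_ne_zero.mpr hr
    rcases hx with rfl | rfl | ⟨⟨xa, hxa⟩, rfl⟩ <;> simp [Q, smul, hr] <;>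
      positivity

lemma nrel_smul {v : ℝ} (hv : 0 ≤ v) (r : ℝ≥0) {x y : CP} (h : nrel v x y) :
    nrel ((r : ℝ) * v) (smul r x) (smul r y) := by
  by_cases hr : r = 0
  · subst hr; simp [smul, nrel]
  · cases x with
    | zero => simp [smul, hr, nrel]
    | inf =>
        cases y with
        | inf => simp [smul, hr, nrel]
        | zero => exact absurd h (by simp [nrel])
        | elt b i => exact absurd h (by simp [nrel])
    | elt a i =>
        cases y with
        | zero => exact absurd h (by simp [nrel])
        | inf => simp [smul, hr, nrel]
        | elt b i' =>
            obtain ⟨rfl, hab⟩ := h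
            simp only [smul, dif_neg hr]
            refine ⟨rfl, ?_⟩
            show (r : ℝ) * a.1 ≤ (r : ℝ) * b.1 + (i : ℝ) * ((r : ℝ) * v)
            have hr0 : (0 : ℝ) ≤ (r : ℝ) := r.2
            nlinarith [mul_le_mul_of_nonneg_left hab hr0]

lemma nrel_add {j : ℕ+} {v₁ v₂ : ℝ} (h₁ : 0 ≤ v₁) (h₂ : 0 ≤ v₂)
    {x x' y y' : CP} (hx : x ∈ Q j) (hx' : x' ∈ Q j) (hy : y ∈ Q j)
    (hy' : y' ∈ Q j) (h : nrel v₁ x x') (h' : nrel v₂ y y') :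
    nrel (v₁ + v₂) (add x y) (add x' y') := by
  rcases hx with rfl | rfl | ⟨⟨xa, hxa⟩, rfl⟩ <;>
    rcases hx' with rfl | rfl | ⟨⟨xa', hxa'⟩, rfl⟩ <;>
    rcases hy with rfl | rfl | ⟨⟨ya, hya⟩, rfl⟩ <;>
    rcases hy' with rfl | rfl | ⟨⟨ya', hya'⟩, rfl⟩ <;>
    simp_all [nrel, add] <;>
    nlinarith [(Nat.cast_nonneg (j : ℕ) : (0 : ℝ) ≤ ((j : ℕ) : ℝ))]

lemma top_add_one' : (⊤ : EReal) + 1 = ⊤ := EReal.top_add_coe 1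

lemma fnBarInf_nonneg (x : CP) : 0 ≤ fnBarInf x := by
  cases x <;> simp [fnBarInf]

lemma fnLam_nonneg {c : ℝ} (hc : 0 ≤ c) (k : ℕ+) (x : CP) :
    0 ≤ fnLam c k x := by
  cases x with
  | zero => simp [fnLam]
  | inf => simp [fnLam]
  | elt a i =>
      by_cases h : i = k
      · simp only [fnLam, if_pos h]
        exact_mod_cast mul_nonneg hc a.2.le
      · simp [fnLam, h]

lemma fnBarInf_dual (j : ℕ+) : InDualOn (Q j) fnBarInf := by
  refine ⟨⟨rfl, ?_, ?_, ?_⟩, 1, one_pos, ?_⟩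
  · intro x; cases x <;> simp [fnBarInf]
  · intro x hx y hy
    rcases hx with rfl | rfl | ⟨a, rfl⟩ <;> rcases hy with rfl | rfl | ⟨b, rfl⟩ <;>
      simp [fnBarInf, add]
  · intro r x hx
    by_cases hr : r = 0
    · subst hr
      rcases hx with rfl | rfl | ⟨a, rfl⟩ <;> simp [fnBarInf, smul]
    · have hr' : (0 : ℝ) < (r : ℝ) := by exact_mod_cast pos_iff_ne_zero.mpr hr
      rcases hx with rfl | rfl | ⟨a, rfl⟩ <;>
        simp [fnBarInf, smul, hr, EReal.coe_mul_top_of_pos hr']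
  · intro x hx y hy hxy
    rcases hx with rfl | rfl | ⟨a, rfl⟩ <;> rcases hy with rfl | rfl | ⟨b, rfl⟩ <;>
      simp_all [fnBarInf, nrel] <;>
      first
        | exact le_top
        | exact top_add_one' 

lemma fnBarInf_bmono (w : ℝ) (j : ℕ+) :
    ∀ p ∈ Bset w j, fnBarInf p.1 ≤ fnBarInf p.2 + 1 := by
  rintro ⟨x, y⟩ ⟨hx, hy, hxy⟩
  rcases hx with rfl | rfl | ⟨a, rfl⟩ <;> rcases hy with rfl | rfl | ⟨b, rfl⟩ <;>
    simp_all [fnBarInf, nrel] <;> first | exact le_top | exact top_add_one' 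

lemma fnLam_elt (c : ℝ) (j : ℕ+) (a : Rpos) :
    fnLam c j (elt a j) = ((c * a.1 : ℝ) : EReal) := if_pos rfl

lemma fnLam_le {w : ℝ} (hw : 0 < w) (j : ℕ+) {a b : Rpos}
    (hab : a.1 ≤ b.1 + w) :
    fnLam (1 / w) j (elt a j) ≤ fnLam (1 / w) j (elt b j) + 1 := by
  rw [fnLam_elt, fnLam_elt, show (1 : EReal) = ((1 : ℝ) : EReal) from rfl,
    ← EReal.coe_add, EReal.coe_le_coe_iff]
  have h1 : 1 / w * a.1 ≤ 1 / w * (b.1 + w) :=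
    mul_le_mul_of_nonneg_left hab (by positivity)
  calc 1 / w * a.1 ≤ 1 / w * (b.1 + w) := h1
    _ = 1 / w * b.1 + 1 := by field_simp

lemma nrel_elt_elt {w : ℝ} (j : ℕ+) {a b : Rpos}
    (h : nrel (w / (j : ℝ)) (elt a j) (elt b j)) : a.1 ≤ b.1 + w := by
  obtain ⟨-, h⟩ := h
  rwa [mul_div_cancel₀ _ (by positivity : ((j : ℕ) : ℝ) ≠ 0)] at h

lemma fnLam_dual {w : ℝ} (hw : 0 < w) (j : ℕ+) :
    InDualOn (Q j) (fnLam (1 / w) j) := by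
  refine ⟨⟨rfl, ?_, ?_, ?_⟩, w / (j : ℝ), by positivity, ?_⟩
  · intro x
    cases x with
    | zero => simp [fnLam]
    | inf => simp [fnLam]
    | elt a i =>
        by_cases h : i = j
        · rw [show fnLam (1 / w) j (elt a i) = _ from if_pos h]
          exact EReal.coe_ne_bot _
        · rw [show fnLam (1 / w) j (elt a i) = _ from if_neg h]
          exact top_ne_bot
  · intro x hx y hy
    rcases hx with rfl | rfl | ⟨a, rfl⟩ <;> rcases hy with rfl | rfl | ⟨b, rfl⟩
    · exact (zero_add 0).symm
    · exact (zero_add ⊤).symm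
    · show fnLam (1 / w) j (elt b j) = 0 + fnLam (1 / w) j (elt b j)
      rw [zero_add]
    · exact (add_zero ⊤).symm
    · exact EReal.top_add_top.symm
    · rw [show add inf (elt b j) = inf from rfl, show fnLam (1/w) j inf = ⊤ from rfl,
        fnLam_elt, EReal.top_add_coe]
    · show fnLam (1 / w) j (elt a j) = fnLam (1 / w) j (elt a j) + 0
      rw [add_zero]
    · rw [show add (elt a j) inf = inf from rfl, show fnLam (1/w) j inf = ⊤ from rfl,
        fnLam_elt, EReal.coe_add_top]
    · rw [show add (elt a j) (elt b j) = elt ⟨a.1 + b.1, add_pos a.2 b.2⟩ j from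
        if_pos rfl, fnLam_elt, fnLam_elt, fnLam_elt, ← EReal.coe_add]
      exact congrArg Real.toEReal (by ring)
  · intro r x hx
    by_cases hr : r = 0
    · subst hr
      rcases hx with rfl | rfl | ⟨a, rfl⟩ <;>
        simp [fnLam, smul, fnLam_nonneg (by positivity : (0:ℝ) ≤ 1/w) j]
    · have hr' : (0 : ℝ) < (r : ℝ) := by exact_mod_cast pos_iff_ne_zero.mpr hr
      rcases hx with rfl | rfl | ⟨a, rfl⟩
      · simp [fnLam, smul, hr]
      · rw [show smul r inf = inf from dif_neg hr,
          show fnLam (1/w) j inf = ⊤ from rfl, EReal.coe_mul_top_of_pos hr']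
      · rw [show smul r (elt a j) = elt ⟨(r : ℝ) * a.1, mul_pos hr' a.2⟩ j from
          dif_neg hr, fnLam_elt, fnLam_elt, ← EReal.coe_mul]
        exact congrArg Real.toEReal (by ring)
  · intro x hx y hy hxy
    rcases hx with rfl | rfl | ⟨a, rfl⟩
    · exact le_trans (le_of_eq rfl)
        (add_nonneg (fnLam_nonneg (by positivity : (0:ℝ) ≤ 1/w) j y) zero_le_one)
    · rcases hy with rfl | rfl | ⟨b, rfl⟩
      · exact hxy.elim
      · rw [show fnLam (1/w) j inf = ⊤ from rfl, top_add_one']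
      · exact hxy.elim
    · rcases hy with rfl | rfl | ⟨b, rfl⟩
      · exact hxy.elim
      · rw [show fnLam (1/w) j inf = ⊤ from rfl, top_add_one']; exact le_top
      · exact fnLam_le hw j (nrel_elt_elt j hxy)

lemma fnLam_bmono {w : ℝ} (hw : 0 < w) (j : ℕ+) :
    ∀ p ∈ Bset w j, fnLam (1 / w) j p.1 ≤ fnLam (1 / w) j p.2 + 1 := by
  rintro ⟨x, y⟩ ⟨hx, hy, hxy⟩
  rcases hx with rfl | rfl | ⟨a, rfl⟩
  · exact le_trans (le_of_eq rfl)
      (add_nonneg (fnLam_nonneg (by positivity : (0:ℝ) ≤ 1/w) j y) zero_le_one)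
  · rcases hy with rfl | rfl | ⟨b, rfl⟩
    · exact hxy.elim
    · rw [show fnLam (1/w) j inf = ⊤ from rfl, top_add_one']
    · exact hxy.elim
  · rcases hy with rfl | rfl | ⟨b, rfl⟩
    · exact hxy.elim
    · rw [show fnLam (1/w) j inf = ⊤ from rfl, top_add_one']; exact le_top
    · exact fnLam_le hw j (nrel_elt_elt j hxy)

/-- `B_j = {(x,y) ∈ Q_j² : x ⪯ y + w/j}` is a barrel in
`(Q_j, V)`; condition (B1) holds with `v = w/j` and `λ = 1`. -/
theorem stmt12 (w : ℝ) (hw : 0 < w) (j : ℕ+) :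
    IsBarrelOn (Q j) (Bset w j) ∧
    (∀ b ∈ Q j, ∀ a ∈ symN (Q j) (w / (j : ℝ)) b, (a, b) ∈ Bset w j) := by
  have hv : (0 : ℝ) < w / (j : ℝ) := by positivity
  have hB1 : ∀ b ∈ Q j, ∀ a ∈ symN (Q j) (w / (j : ℝ)) b, (a, b) ∈ Bset w j := by
    rintro b hb a ⟨ha, hab, hba⟩
    exact ⟨ha, hb, hab⟩
  refine ⟨⟨?_, ?_, ?_, ?_⟩, hB1⟩
  · rintro ⟨x, y⟩ ⟨hx, hy, _⟩
    exact ⟨hx, hy⟩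
  · rintro ⟨x, y⟩ ⟨hx, hy, hxy⟩ ⟨x', y'⟩ ⟨hx', hy', hxy'⟩ t ht
    have hts : ((t : ℝ)) * (w / (j : ℝ)) + ((1 - t : ℝ≥0) : ℝ) * (w / (j : ℝ))
        = w / (j : ℝ) := by
      rw [NNReal.coe_sub ht]; push_cast; ring
    refine ⟨add_mem_Q (smul_mem_Q t hx) (smul_mem_Q _ hx'),
      add_mem_Q (smul_mem_Q t hy) (smul_mem_Q _ hy'), ?_⟩
    have := nrel_add (j := j) (by positivity) (by positivity)
      (smul_mem_Q t hx) (smul_mem_Q t hy)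
      (smul_mem_Q (1 - t) hx') (smul_mem_Q (1 - t) hy')
      (nrel_smul hv.le t hxy) (nrel_smul hv.le (1 - t) hxy')
    rwa [hts] at this
  · intro b hb
    refine ⟨w / (j : ℝ), hv, fun a ha => ⟨1, one_pos, ?_⟩⟩
    exact ⟨(a, b), hB1 b hb a ha, by simp [smul_one']⟩
  · intro a ha b hb hab
    have hnab : ¬ nrel (w / (j : ℝ)) a b := fun h => hab ⟨ha, hb, h⟩
    rcases ha with rfl | rfl | ⟨x, rfl⟩
    · exact absurd (show nrel (w / (j : ℝ)) zero b by cases b <;> trivial) hnab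
    · rcases hb with rfl | rfl | ⟨y, rfl⟩
      · refine ⟨fnBarInf, fnBarInf_dual j, ?_, fnBarInf_bmono w j⟩
        show (0 : EReal) + 1 < ⊤
        rw [zero_add]
        exact EReal.coe_lt_top 1
      · exact absurd (by trivial : nrel (w / (j : ℝ)) inf inf) hnab
      · refine ⟨fnLam (1 / w) j, fnLam_dual hw j, ?_, fnLam_bmono hw j⟩
        rw [fnLam_elt, show fnLam (1 / w) j inf = ⊤ from rfl,
          show (1 : EReal) = ((1 : ℝ) : EReal) from rfl, ← EReal.coe_add]
        exact EReal.coe_lt_top _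
    · rcases hb with rfl | rfl | ⟨y, rfl⟩
      · refine ⟨fnBarInf, fnBarInf_dual j, ?_, fnBarInf_bmono w j⟩
        show (0 : EReal) + 1 < ⊤
        rw [zero_add]
        exact EReal.coe_lt_top 1
      · exact absurd (by trivial : nrel (w / (j : ℝ)) (elt x j) inf) hnab
      · have hj : ((j : ℝ)) ≠ 0 := by positivity
        have hxy : ¬ (x.1 ≤ y.1 + (j : ℝ) * (w / (j : ℝ))) := by
          intro h; exact hnab ⟨rfl, h⟩
        rw [mul_div_cancel₀ _ hj] at hxy
        push_neg at hxy
        refine ⟨fnLam (1 / w) j, fnLam_dual hw j, ?_, fnLam_bmono hw j⟩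
        rw [fnLam_elt, fnLam_elt, show (1 : EReal) = ((1 : ℝ) : EReal) from rfl,
          ← EReal.coe_add, EReal.coe_lt_coe_iff]
        have : 1 / w * (y.1 + w) < 1 / w * x.1 :=
          mul_lt_mul_of_pos_left hxy (by positivity)
        calc 1 / w * y.1 + 1 = 1 / w * (y.1 + w) := by field_simp
          _ < 1 / w * x.1 := this

end CP
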